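/- arXiv:1801.00457 — 4 statements merged into one kernel-verified Lean document; each statement's English description precedes it below -/
import Mathlib

section
/- Let v > 0 and C^i > 0. The unique solution of the system v·u₀^i − C^i = (1/2)(v√C^j − C^j + v√C^k − C^k), C^j + v√C^j = (1/2)(C^i + v·u₀^i + v√C^k − C^k), C^k + v√C^k = (1/2)(C^i + v·u₀^i + v√C^j − C^j) with C^j, C^k > 0 is C^j = C^k = C^i/2 and u₀^i = C^i/(2v) + √(C^i/2). -/
/-!
Subtracting the two equations of the unstable edges gives
`(√Cʲ - √Cᵏ) (√Cʲ + √Cᵏ + 3v) = 0`, so `Cʲ = Cᵏ`; the remaining system is then linear in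
`Cʲ` and `v u₀ⁱ`.
-/

lemma eq_of_sq_add_mul_eq_sq_add_mul {a b c : ℝ} (ha : 0 ≤ a) (hb : 0 ≤ b) (hc : 0 ≤ c)
    (h : a ^ 2 + c * a = b ^ 2 + c * b) : a = b := by
  have hfactor : (a - b) * (a + b + c) = 0 := by linear_combination h
  rcases mul_eq_zero.mp hfactor with hab | hsum <;> linarith

theorem SUU_at_12_node_general (v Ci : ℝ) (hv : 0 < v) :
    ∀ Cj Ck u₀i : ℝ, 0 < Cj → 0 < Ck →
    ((v * u₀i - Ci =
        (1 / 2) * (v * Real.sqrt Cj - Cj + v * Real.sqrt Ck - Ck) ∧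
      Cj + v * Real.sqrt Cj =
        (1 / 2) * (Ci + v * u₀i + v * Real.sqrt Ck - Ck) ∧
      Ck + v * Real.sqrt Ck =
        (1 / 2) * (Ci + v * u₀i + v * Real.sqrt Cj - Cj)) ↔
    (Cj = Ci / 2 ∧ Ck = Ci / 2 ∧
      u₀i = Ci / (2 * v) + Real.sqrt (Ci / 2))) := by
  intro Cj Ck u hCj hCk
  constructor
  · rintro ⟨h1, h2, h3⟩
    have hsqrt : √Cj = √Ck :=
      eq_of_sq_add_mul_eq_sq_add_mul (Real.sqrt_nonneg _) (Real.sqrt_nonneg _)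
        (by positivity : 0 ≤ 3 * v)
        (by linear_combination 2 * h2 - 2 * h3 + Real.sq_sqrt hCj.le - Real.sq_sqrt hCk.le)
    obtain rfl : Cj = Ck := (Real.sqrt_inj hCj.le hCk.le).mp hsqrt
    have hCj : Cj = Ci / 2 := by linarith
    refine ⟨hCj, hCj, ?_⟩
    subst hCj
    field_simp
    linarith
  · rintro ⟨rfl, rfl, rfl⟩
    refine ⟨?_, ?_, ?_⟩ <;> field_simp <;> ring

theorem SUU_at_12_node (v Ci : ℝ) (hv : 0 < v) (hCi : 0 < Ci) :
    ∀ Cj Ck u₀i : ℝ, 0 < Cj → 0 < Ck →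
    ((v * u₀i - Ci =
        (1 / 2) * (v * Real.sqrt Cj - Cj + v * Real.sqrt Ck - Ck) ∧
      Cj + v * Real.sqrt Cj =
        (1 / 2) * (Ci + v * u₀i + v * Real.sqrt Ck - Ck) ∧
      Ck + v * Real.sqrt Ck =
        (1 / 2) * (Ci + v * u₀i + v * Real.sqrt Cj - Cj)) ↔
    (Cj = Ci / 2 ∧ Ck = Ci / 2 ∧
      u₀i = Ci / (2 * v) + Real.sqrt (Ci / 2))) :=
  SUU_at_12_node_general v Ci hv
end

section
/- Let v > 0 and C^i > C^j ≥ 0, and set C^k = C^i − C^j. Then the solutions of the S-S-U coupling system at a 1-2 node are u₀^i = √C^k + (C^k + C^i)/(3v) and u₀^j = √C^k + (C^k − C^j)/(3v); moreover the admissibility condition u₀^j < √C^j holds if and only if C^k < C^j, i.e., C^j < C^i < 2C^j. -/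
/-! Eliminating `u₀ⁱ` from the first two coupling conditions gives `u₀ʲ` in closed form, and the
third condition is then the sum of the first two once `Cᵏ = Cⁱ - Cʲ`. The admissibility condition
compares values of `x ↦ √x + x / (3v)`, which is strictly increasing on all of `ℝ`. -/

lemma coupling_system_iff {v Ci Cj Ck s ui uj : ℝ} (hv : v ≠ 0) (hCk : Ck = Ci - Cj) :
    (v * ui - Ci = (1 / 2) * (v * uj - Cj + v * s - Ck) ∧
      Cj + v * uj = (1 / 2) * (Ci + v * ui + v * s - Ck) ∧
      Ck + v * s = (1 / 2) * (Ci + v * ui + v * uj - Cj)) ↔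
    (ui = s + (Ck + Ci) / (3 * v) ∧ uj = s + (Ck - Cj) / (3 * v)) := by
  subst hCk
  constructor
  · rintro ⟨h₁, h₂, -⟩
    constructor <;> field_simp <;> linarith
  · rintro ⟨rfl, rfl⟩
    refine ⟨?_, ?_, ?_⟩ <;> field_simp <;> ring

lemma strictMono_sqrt_add_div {c : ℝ} (hc : 0 < c) : StrictMono fun x => √x + x / c :=
  Real.sqrt_monotone.add_strictMono fun _ _ h => div_lt_div_of_pos_right h hc

lemma sqrt_add_sub_div_lt_sqrt_iff {c : ℝ} (hc : 0 < c) (a b : ℝ) :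
    √a + (a - b) / c < √b ↔ a < b := by
  have key : √a + a / c < √b + b / c ↔ a < b := (strictMono_sqrt_add_div hc).lt_iff_lt
  rw [← key, sub_div]
  constructor <;> intro h <;> linarith

theorem SSU_at_12_node_general (v Ci Cj : ℝ) (hv : 0 < v)
    (hCi : Cj < Ci) (Ck : ℝ) (hCk : Ck = Ci - Cj) :
    (∀ u₀i u₀j : ℝ,
      (v * u₀i - Ci = (1 / 2) * (v * u₀j - Cj + v * Real.sqrt Ck - Ck) ∧
       Cj + v * u₀j = (1 / 2) * (Ci + v * u₀i + v * Real.sqrt Ck - Ck) ∧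
       Ck + v * Real.sqrt Ck = (1 / 2) * (Ci + v * u₀i + v * u₀j - Cj)) ↔
      (u₀i = Real.sqrt Ck + (Ck + Ci) / (3 * v) ∧
       u₀j = Real.sqrt Ck + (Ck - Cj) / (3 * v))) ∧
    ((Real.sqrt Ck + (Ck - Cj) / (3 * v) < Real.sqrt Cj ↔ Ck < Cj) ∧
     (Ck < Cj ↔ (Cj < Ci ∧ Ci < 2 * Cj))) := by
  refine ⟨fun _ _ => coupling_system_iff hv.ne' hCk,
    sqrt_add_sub_div_lt_sqrt_iff (by positivity) Ck Cj, ?_⟩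
  subst hCk
  exact ⟨fun h => ⟨hCi, by linarith⟩, fun h => by linarith [h.2]⟩

theorem SSU_at_12_node (v Ci Cj : ℝ) (hv : 0 < v) (hCj : 0 ≤ Cj)
    (hCi : Cj < Ci) (Ck : ℝ) (hCk : Ck = Ci - Cj) :
    (∀ u₀i u₀j : ℝ,
      (v * u₀i - Ci = (1 / 2) * (v * u₀j - Cj + v * Real.sqrt Ck - Ck) ∧
       Cj + v * u₀j = (1 / 2) * (Ci + v * u₀i + v * Real.sqrt Ck - Ck) ∧
       Ck + v * Real.sqrt Ck = (1 / 2) * (Ci + v * u₀i + v * u₀j - Cj)) ↔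
      (u₀i = Real.sqrt Ck + (Ck + Ci) / (3 * v) ∧
       u₀j = Real.sqrt Ck + (Ck - Cj) / (3 * v))) ∧
    ((Real.sqrt Ck + (Ck - Cj) / (3 * v) < Real.sqrt Cj ↔ Ck < Cj) ∧
     (Ck < Cj ↔ (Cj < Ci ∧ Ci < 2 * Cj))) :=
  SSU_at_12_node_general v Ci Cj hv hCi Ck hCk
end

section
/- Let v > 0, C^j, C^k ≥ 0, and set C^i = C^j + C^k. Then u₀^j = −(C^i + C^j)/(3v) − √C^i and u₀^k = −(C^i + C^k)/(3v) − √C^i solve the U-S-S coupling system: −v√C^i − C^i = (1/2)(v·u₀^j − C^j + v·u₀^k − C^k), C^j + v·u₀^j = (1/2)(C^i − v√C^i + v·u₀^k − C^k), C^k + v·u₀^k = (1/2)(C^i − v√C^i + v·u₀^j − C^j). -/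
/-! Multiplying the candidate node values by `v` removes the division, after which the three
coupling equations are linear in `Cj`, `Ck` and `v * √Ci`. -/

theorem mul_neg_div_mul_sub_eq {K : Type*} [Field K] {v : K} (hv : v ≠ 0) (a c s : K) :
    v * (-a / (c * v) - s) = -a / c - v * s := by
  field_simp

theorem USS_at_12_node_general (v Cj Ck : ℝ) (hv : 0 < v) (Ci : ℝ) (hCi : Ci = Cj + Ck)
    (u₀j u₀k : ℝ)
    (hj : u₀j = -(Ci + Cj) / (3 * v) - Real.sqrt Ci)
    (hk : u₀k = -(Ci + Ck) / (3 * v) - Real.sqrt Ci) :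
    (-v * Real.sqrt Ci - Ci = (1 / 2) * (v * u₀j - Cj + v * u₀k - Ck)) ∧
    (Cj + v * u₀j = (1 / 2) * (Ci - v * Real.sqrt Ci + v * u₀k - Ck)) ∧
    (Ck + v * u₀k = (1 / 2) * (Ci - v * Real.sqrt Ci + v * u₀j - Cj)) := by
  have hvj : v * u₀j = -(Ci + Cj) / 3 - v * Real.sqrt Ci := by
    rw [hj, mul_neg_div_mul_sub_eq hv.ne']
  have hvk : v * u₀k = -(Ci + Ck) / 3 - v * Real.sqrt Ci := by
    rw [hk, mul_neg_div_mul_sub_eq hv.ne']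
  refine ⟨?_, ?_, ?_⟩ <;> linarith

theorem USS_at_12_node (v Cj Ck : ℝ) (hv : 0 < v) (hCj : 0 ≤ Cj)
    (hCk : 0 ≤ Ck) (Ci : ℝ) (hCi : Ci = Cj + Ck)
    (u₀j u₀k : ℝ)
    (hj : u₀j = -(Ci + Cj) / (3 * v) - Real.sqrt Ci)
    (hk : u₀k = -(Ci + Ck) / (3 * v) - Real.sqrt Ci) :
    (-v * Real.sqrt Ci - Ci = (1 / 2) * (v * u₀j - Cj + v * u₀k - Ck)) ∧
    (Cj + v * u₀j = (1 / 2) * (Ci - v * Real.sqrt Ci + v * u₀k - Ck)) ∧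
    (Ck + v * u₀k = (1 / 2) * (Ci - v * Real.sqrt Ci + v * u₀j - Cj)) :=
  USS_at_12_node_general v Cj Ck hv Ci hCi u₀j u₀k hj hk
end

section
/- The symmetric kinetic coupling conditions at a 1-2 node, f₁^i = (1/2)(f₁^j + f₁^k), f₂^j = (1/2)(f₂^i + f₁^k), f₂^k = (1/2)(f₂^i + f₁^j), conserve the total kinetic flux, i.e., v₁f₁^i + v₂f₂^i = v₁f₁^j + v₂f₂^j + v₁f₁^k + v₂f₂^k, for all values of (f₁^i, f₂^i, f₁^j, f₂^j, f₁^k, f₂^k), if and only if v₁ = −v₂. -/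
theorem flux_defect_of_symmetric_coupling {v₁ v₂ f1i f2i f1j f2j f1k f2k : ℝ}
    (hi : f1i = (1 / 2) * (f1j + f1k)) (hj : f2j = (1 / 2) * (f2i + f1k))
    (hk : f2k = (1 / 2) * (f2i + f1j)) :
    v₁ * f1i + v₂ * f2i - (v₁ * f1j + v₂ * f2j + v₁ * f1k + v₂ * f2k) =
      -((v₁ + v₂) / 2 * (f1j + f1k)) := by
  subst hi hj hk
  ring

theorem mass_conservation_iff_symmetric_speeds_general (v₁ v₂ : ℝ) :
    ((∀ f1i f2i f1j f2j f1k f2k : ℝ,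
        (f1i = (1 / 2) * (f1j + f1k) ∧
         f2j = (1 / 2) * (f2i + f1k) ∧
         f2k = (1 / 2) * (f2i + f1j)) →
        v₁ * f1i + v₂ * f2i =
          v₁ * f1j + v₂ * f2j + v₁ * f1k + v₂ * f2k) ↔ v₁ = -v₂) := by
  constructor
  · intro hconserved
    have hi : (1 : ℝ) = 1 / 2 * (1 + 1) := by norm_num
    have hj : (1 / 2 : ℝ) = 1 / 2 * (0 + 1) := by norm_num
    have hdefect := flux_defect_of_symmetric_coupling (v₁ := v₁) (v₂ := v₂) hi hj hj
    rw [hconserved 1 0 1 (1 / 2) 1 (1 / 2) ⟨hi, hj, hj⟩, sub_self] at hdefect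
    linarith
  · rintro rfl f1i f2i f1j f2j f1k f2k ⟨hi, hj, hk⟩
    have hdefect := flux_defect_of_symmetric_coupling (v₁ := -v₂) (v₂ := v₂) hi hj hk
    rw [neg_add_cancel, zero_div, zero_mul, neg_zero] at hdefect
    exact sub_eq_zero.mp hdefect

theorem mass_conservation_iff_symmetric_speeds (v₁ v₂ : ℝ)
    (h1 : v₁ < 0) (h2 : 0 < v₂) :
    ((∀ f1i f2i f1j f2j f1k f2k : ℝ,
        (f1i = (1 / 2) * (f1j + f1k) ∧
         f2j = (1 / 2) * (f2i + f1k) ∧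
         f2k = (1 / 2) * (f2i + f1j)) →
        v₁ * f1i + v₂ * f2i =
          v₁ * f1j + v₂ * f2j + v₁ * f1k + v₂ * f2k) ↔ v₁ = -v₂) :=
  mass_conservation_iff_symmetric_speeds_general v₁ v₂
end
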